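/- arXiv:1111.2767 — 4 statements merged into one kernel-verified Lean document; each statement's English description precedes it below -/
import Mathlib

section
/- For every integer s ≥ 1, ∑_{k=1}^{s} S(s,k)(k-1)! ≤ s! e^{s}, where S(s,k) are the Stirling numbers of the second kind. -/
/-- Stirling numbers of the second kind. -/
def stirling : ℕ → ℕ → ℕ
  | 0, 0 => 1
  | 0, _ + 1 => 0
  | _ + 1, 0 => 0
  | n + 1, k + 1 => (k + 1) * stirling n (k + 1) + stirling n k

open Finset

lemma pascal_sum (g : ℕ → ℕ) (m : ℕ) :
    ∑ j ∈ range (m + 2), (m + 1).choose j * g j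
      = (∑ i ∈ range (m + 1), m.choose i * g (i + 1))
        + ∑ i ∈ range (m + 1), m.choose i * g i := by
  rw [Finset.sum_range_succ' (fun j => (m + 1).choose j * g j)]
  have h1 : ∀ i, (m + 1).choose (i + 1) * g (i + 1)
      = m.choose i * g (i + 1) + m.choose (i + 1) * g (i + 1) := by
    intro i
    rw [Nat.choose_succ_succ, add_mul]
  simp_rw [h1]
  rw [Finset.sum_add_distrib]
  have h2 : ∑ i ∈ range (m + 1), m.choose (i + 1) * g (i + 1) + (m + 1).choose 0 * g 0
      = ∑ i ∈ range (m + 1), m.choose i * g i := by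
    rw [Finset.sum_range_succ' (fun i => m.choose i * g i)]
    rw [Finset.sum_range_succ (fun i => m.choose (i + 1) * g (i + 1))]
    simp [Nat.choose_succ_self]
  omega

lemma stirling_identity (n : ℕ) : ∀ k, ∑ j ∈ range (k + 1),
    k.choose j * (j.factorial * stirling n j) = k ^ n := by
  induction n with
  | zero =>
    intro k
    rw [Finset.sum_range_succ' (fun j => k.choose j * (j.factorial * stirling 0 j))]
    simp [stirling]
  | succ n ih =>
    intro k
    match k with
    | 0 => simp [stirling]
    | m + 1 =>
      rw [Finset.sum_range_succ' (fun j => (m+1).choose j * (j.factorial * stirling (n+1) j))]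
      have h0 : stirling (n + 1) 0 = 0 := rfl
      rw [h0]
      simp only [mul_zero, add_zero]
      have key : ∀ i, (m + 1).choose (i + 1) * ((i + 1).factorial * stirling (n + 1) (i + 1))
          = (m + 1) * (m.choose i * ((i + 1).factorial * stirling n (i + 1)
              + i.factorial * stirling n i)) := by
        intro i
        have hs : stirling (n + 1) (i + 1) = (i + 1) * stirling n (i + 1) + stirling n i := rfl
        have hc : (m + 1).choose (i + 1) * (i + 1) = (m + 1) * m.choose i := by
          rw [← Nat.add_one_mul_choose_eq]
        have hf : (i + 1).factorial = (i + 1) * i.factorial := rfl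
        calc (m + 1).choose (i + 1) * ((i + 1).factorial * stirling (n + 1) (i + 1))
            = ((m + 1).choose (i + 1) * (i + 1)) * ((i + 1).factorial * stirling n (i + 1)
              + i.factorial * stirling n i) := by
              rw [hs, hf]; ring
          _ = (m + 1) * (m.choose i * ((i + 1).factorial * stirling n (i + 1)
              + i.factorial * stirling n i)) := by rw [hc]; ring
      simp_rw [key]
      rw [← Finset.mul_sum]
      have hsplit : ∑ i ∈ range (m + 1), m.choose i * ((i + 1).factorial * stirling n (i + 1)
          + i.factorial * stirling n i)
          = (∑ i ∈ range (m + 1), m.choose i * ((i + 1).factorial * stirling n (i + 1)))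
            + ∑ i ∈ range (m + 1), m.choose i * (i.factorial * stirling n i) := by
        simp_rw [mul_add]; rw [Finset.sum_add_distrib]
      rw [hsplit, ih m]
      have hp := pascal_sum (fun j => j.factorial * stirling n j) m
      have := ih (m + 1)
      rw [hp] at this
      rw [ih m] at this
      have : ∑ i ∈ range (m + 1), m.choose i * ((i+1).factorial * stirling n (i + 1))
          = (m + 1) ^ n - m ^ n := by omega
      rw [this]
      have hle : m ^ n ≤ (m + 1) ^ n := Nat.pow_le_pow_left (by omega) n
      have : (m + 1) ^ n - m ^ n + m ^ n = (m + 1) ^ n := by omega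
      rw [this]
      ring

lemma fact_stirling_le (n k : ℕ) : k.factorial * stirling n k ≤ k ^ n := by
  have h := stirling_identity n k
  calc k.factorial * stirling n k = k.choose k * (k.factorial * stirling n k) := by
        rw [Nat.choose_self, one_mul]
    _ ≤ ∑ j ∈ range (k + 1), k.choose j * (j.factorial * stirling n j) := by
        apply Finset.single_le_sum (f := fun j => k.choose j * (j.factorial * stirling n j))
          (fun _ _ => Nat.zero_le _)
        simp
    _ = k ^ n := h

/-- For every `s ≥ 1`, `∑_{k=1}^{s} S(s,k) (k-1)! ≤ s! e^{s}`, where `S(s,k)` are the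
Stirling numbers of the second kind. -/
theorem stirling_factorial_sum_le (s : ℕ) (hs : 1 ≤ s) :
    (∑ k ∈ Finset.Icc 1 s, (stirling s k : ℝ) * (k - 1).factorial)
      ≤ (s.factorial : ℝ) * Real.exp s := by
  have hterm : ∀ k ∈ Finset.Icc 1 s,
      (stirling s k : ℝ) * (k - 1).factorial ≤ (s : ℝ) ^ (s - 1) := by
    intro k hk
    simp only [Finset.mem_Icc] at hk
    obtain ⟨hk1, hks⟩ := hk
    have hnat : (k - 1).factorial * stirling s k ≤ k ^ (s - 1) := by
      have h := fact_stirling_le s k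
      have hfac : k.factorial = k * (k - 1).factorial := by
        conv_lhs => rw [show k = (k - 1) + 1 by omega]
        rw [Nat.factorial_succ]
        congr 1
        omega
      have hpow : k ^ s = k * k ^ (s - 1) := by
        conv_lhs => rw [show s = (s - 1) + 1 by omega]
        rw [pow_succ]
        ring
      rw [hfac, hpow, mul_assoc] at h
      exact Nat.le_of_mul_le_mul_left h (by omega)
    calc (stirling s k : ℝ) * (k - 1).factorial
        = ((k - 1).factorial * stirling s k : ℕ) := by push_cast; ring
      _ ≤ ((k : ℝ)) ^ (s - 1) := by exact_mod_cast Nat.cast_le.mpr hnat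
      _ ≤ (s : ℝ) ^ (s - 1) := by
          apply pow_le_pow_left₀ (by positivity)
          exact_mod_cast hks
  have hsum : (∑ k ∈ Finset.Icc 1 s, (stirling s k : ℝ) * (k - 1).factorial)
      ≤ (s : ℝ) ^ s := by
    calc (∑ k ∈ Finset.Icc 1 s, (stirling s k : ℝ) * (k - 1).factorial)
        ≤ ∑ _k ∈ Finset.Icc 1 s, (s : ℝ) ^ (s - 1) := Finset.sum_le_sum hterm
      _ = (Finset.Icc 1 s).card * (s : ℝ) ^ (s - 1) := by rw [Finset.sum_const]; simp
      _ = (s : ℝ) * (s : ℝ) ^ (s - 1) := by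
          rw [Nat.card_Icc, show s + 1 - 1 = s from rfl]
      _ = (s : ℝ) ^ s := by
          rw [← pow_succ', Nat.sub_add_cancel hs]
  refine hsum.trans ?_
  have hfac : (0 : ℝ) < s.factorial := by exact_mod_cast s.factorial_pos
  rw [mul_comm, ← div_le_iff₀ hfac]
  calc (s : ℝ) ^ s / s.factorial
      ≤ ∑ i ∈ Finset.range (s + 1), (s : ℝ) ^ i / i.factorial := by
        exact Finset.single_le_sum (f := fun i => (s : ℝ) ^ i / i.factorial)
          (fun i _ => by positivity) (Finset.self_mem_range_succ s)
    _ ≤ Real.exp s := Real.sum_le_exp_of_nonneg (by positivity) _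
end

section
/- With the subset-convolution ∗-product on functions from finite sets to a commutative ℚ-algebra, define Exp_∗(h)(Y) = δ_{Y,∅}·1 + ∑_{P partition of Y} ∏_{X∈P} h(X) for h with h(∅)=0, and Ln_∗(𝕀+h)(Y) = ∑_{P partition of Y} (-1)^{|P|-1}(|P|-1)! ∏_{X∈P} h(X). Then Ln_∗(Exp_∗(h)) = h for all such h; that is, the partition-sum exponential and the Möbius-type logarithm are mutually inverse. -/
/-!
Expanding every factor `Exp_∗(h)(X)` of `Ln_∗(Exp_∗ h)(Y)` as a sum over partitions of `X` turns
the logarithm into a sum over pairs `P ≥ Q` of partitions of `Y`; such a pair is recorded as a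
partition `σ` of the set of blocks of `Q`, with `P` the partition into the unions of the parts of
`σ`. Summing over the coarse partition first, the coefficient of `∏_{B ∈ Q} h(B)` becomes
`∑_{σ partition of Q} (-1)^{|σ|-1} (|σ|-1)!`, which is `1` if `Q` has one block and `0`
otherwise: inserting a new point into a partition with `k ≥ 1` blocks, either as a new singleton or
into one of the `k` blocks, contributes `(-1)^k k! + k (-1)^{k-1} (k-1)! = 0`.
-/

/-- A finset of finsets `P` is a partition of the finset `Y`. -/
def IsSetPartition {α : Type*} [DecidableEq α] (P : Finset (Finset α)) (Y : Finset α) : Prop :=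
  (∀ X ∈ P, X.Nonempty) ∧
    (∀ X ∈ P, ∀ X' ∈ P, X ≠ X' → Disjoint X X') ∧ P.sup id = Y

open scoped Classical in
/-- The finset of all set partitions of a finset `Y`. -/
noncomputable def setPartitions {α : Type*} [DecidableEq α] (Y : Finset α) :
    Finset (Finset (Finset α)) :=
  Y.powerset.powerset.filter (fun P => IsSetPartition P Y)

/-- The partition-sum exponential `Exp_∗(h)(Y) = δ_{Y,∅} + ∑_{P partition of Y} ∏_{X∈P} h(X)`
(the Kronecker delta term coincides with the contribution of the empty partition of `∅`). -/
noncomputable def ExpStar {R : Type*} [CommRing R] (h : Finset ℕ → R) (Y : Finset ℕ) : R :=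
  ∑ P ∈ setPartitions Y, ∏ X ∈ P, h X

open scoped Classical in
/-- The Möbius-type logarithm
`Ln_∗(𝕀 + h')(Y) = ∑_{P partition of Y, |P| ≥ 1} (-1)^{|P|-1} (|P|-1)! ∏_{X∈P} h'(X)`,
taking as input the full sequence `g = 𝕀 + h'`, so that the blocks are evaluated at
`h' = g - 𝕀`. -/
noncomputable def LnStar {R : Type*} [CommRing R] (g : Finset ℕ → R) (Y : Finset ℕ) : R :=
  ∑ P ∈ (setPartitions Y).filter (fun P => P.Nonempty),
    (-1 : R) ^ (P.card - 1) * (P.card - 1).factorial *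
      ∏ X ∈ P, (g X - if X = ∅ then 1 else 0)

open Finset

section SetPartitions

variable {α : Type*} [DecidableEq α] {P : Finset (Finset α)} {X Y : Finset α}

theorem mem_setPartitions : P ∈ setPartitions Y ↔ IsSetPartition P Y := by
  classical
  refine ⟨fun h ↦ (mem_filter.mp h).2, fun h ↦ mem_filter.mpr ⟨mem_powerset.mpr fun X hX ↦ ?_, h⟩⟩
  rw [mem_powerset, ← h.2.2]
  exact le_sup (f := id) hX

namespace IsSetPartition

theorem subset (hP : IsSetPartition P Y) (hX : X ∈ P) : X ⊆ Y :=
  hP.2.2 ▸ le_sup (f := id) hX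

theorem empty_notMem (hP : IsSetPartition P Y) : ∅ ∉ P :=
  fun h ↦ (hP.1 ∅ h).ne_empty rfl

theorem eq_of_mem_of_mem (hP : IsSetPartition P Y) {X X' : Finset α} (hX : X ∈ P) (hX' : X' ∈ P)
    {a : α} (ha : a ∈ X) (ha' : a ∈ X') : X = X' := by
  by_contra hne
  exact disjoint_left.mp (hP.2.1 X hX X' hX' hne) ha ha'

theorem exists_mem (hP : IsSetPartition P Y) {a : α} (ha : a ∈ Y) : ∃ X ∈ P, a ∈ X := by
  rw [← hP.2.2, mem_sup] at ha
  exact ha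

theorem nonempty (hP : IsSetPartition P Y) (hY : Y.Nonempty) : P.Nonempty :=
  let ⟨_, ha⟩ := hY
  let ⟨X, hX, _⟩ := hP.exists_mem ha
  ⟨X, hX⟩

theorem eq_singleton_of_card_eq_one (hP : IsSetPartition P Y) (h1 : P.card = 1) : P = {Y} := by
  obtain ⟨X, rfl⟩ := card_eq_one.mp h1
  rw [← hP.2.2, sup_singleton, id]

end IsSetPartition

theorem isSetPartition_singleton (hY : Y.Nonempty) : IsSetPartition {Y} Y := by
  refine ⟨?_, ?_, sup_singleton⟩ <;> simp_all

theorem setPartitions_empty : setPartitions (∅ : Finset α) = {∅} := by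
  ext P
  rw [mem_singleton, mem_setPartitions]
  refine ⟨fun hP ↦ eq_empty_of_forall_notMem fun X hX ↦ ?_, fun hP ↦ by simp [hP, IsSetPartition]⟩
  obtain ⟨a, ha⟩ := hP.1 X hX
  exact notMem_empty a (hP.subset hX ha)

end SetPartitions

section InsertPoint

variable {α : Type*} [DecidableEq α] {P σ : Finset (Finset α)} {B C X Y S : Finset α} {a : α}

theorem isSetPartition_insert (hX : X ∉ P) :
    IsSetPartition (insert X P) Y ↔ X.Nonempty ∧ X ⊆ Y ∧ IsSetPartition P (Y \ X) := by
  constructor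
  · intro hP
    have hdisj : Disjoint X (P.sup id) := Finset.disjoint_sup_right.mpr fun X' hX' ↦
      hP.2.1 X (mem_insert_self X P) X' (mem_insert_of_mem hX') fun h ↦ hX (h ▸ hX')
    refine ⟨hP.1 X (mem_insert_self X P), hP.subset (mem_insert_self X P),
      fun X' hX' ↦ hP.1 X' (mem_insert_of_mem hX'),
      fun X₁ h₁ X₂ h₂ ↦ hP.2.1 X₁ (mem_insert_of_mem h₁) X₂ (mem_insert_of_mem h₂), ?_⟩
    rw [← hP.2.2, sup_insert, id, sup_eq_union, union_sdiff_left,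
      sdiff_eq_self_of_disjoint hdisj.symm]
  · rintro ⟨hXne, hXY, hP⟩
    have hdisj : ∀ X' ∈ P, Disjoint X X' := fun X' hX' ↦
      disjoint_of_subset_right (hP.subset hX') disjoint_sdiff
    refine ⟨(forall_mem_insert _ _ _).mpr ⟨hXne, hP.1⟩, ?_, ?_⟩
    · intro X₁ h₁ X₂ h₂ hne
      rcases mem_insert.mp h₁ with rfl | h₁ <;> rcases mem_insert.mp h₂ with h₂ | h₂
      · exact absurd h₂.symm hne
      · exact hdisj X₂ h₂
      · exact h₂ ▸ (hdisj X₁ h₁).symm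
      · exact hP.2.1 X₁ h₁ X₂ h₂ hne
    · rw [sup_insert, hP.2.2, id, sup_eq_union, union_sdiff_of_subset hXY]

namespace IsSetPartition

theorem erase (hP : IsSetPartition P Y) (hX : X ∈ P) : IsSetPartition (P.erase X) (Y \ X) :=
  ((isSetPartition_insert (notMem_erase X P)).mp (by rwa [insert_erase hX])).2.2

theorem subset_of_mem_insert_empty (hσ : IsSetPartition σ S) (hC : C ∈ insert ∅ σ) : C ⊆ S := by
  rcases mem_insert.mp hC with rfl | hC
  exacts [empty_subset S, hσ.subset hC]

theorem insert_notMem (hσ : IsSetPartition σ S) (ha : a ∉ S) (C : Finset α) : insert a C ∉ σ :=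
  fun h ↦ ha (hσ.subset h (mem_insert_self a C))

end IsSetPartition

-- `C = ∅` stands for putting `a` into a new block `{a}`.
def insertPoint (a : α) (σ : Finset (Finset α)) (C : Finset α) : Finset (Finset α) :=
  insert (insert a C) (σ.erase C)

def partBlock (σ : Finset (Finset α)) (a : α) : Finset α :=
  (σ.filter (a ∈ ·)).sup id

def removePoint (a : α) (σ : Finset (Finset α)) : Finset (Finset α) :=
  (insert ((partBlock σ a).erase a) (σ.erase (partBlock σ a))).erase ∅

namespace IsSetPartition

theorem insertPoint (hσ : IsSetPartition σ S) (ha : a ∉ S) (hC : C ∈ insert ∅ σ) :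
    IsSetPartition (insertPoint a σ C) (insert a S) := by
  have hrest : IsSetPartition (σ.erase C) (S \ C) := by
    rcases mem_insert.mp hC with rfl | hC
    · rwa [erase_eq_of_notMem hσ.empty_notMem, sdiff_empty]
    · exact hσ.erase hC
  refine (isSetPartition_insert (mt mem_of_mem_erase (hσ.insert_notMem ha C))).mpr
    ⟨insert_nonempty a C, insert_subset_insert a (hσ.subset_of_mem_insert_empty hC), ?_⟩
  rwa [insert_sdiff_insert, sdiff_insert_of_notMem ha]

theorem partBlock_eq (hσ : IsSetPartition σ Y) (hB : B ∈ σ) (haB : a ∈ B) :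
    partBlock σ a = B := by
  have : σ.filter (a ∈ ·) = {B} := eq_singleton_iff_unique_mem.mpr
    ⟨mem_filter.mpr ⟨hB, haB⟩, fun X hX ↦
      hσ.eq_of_mem_of_mem (mem_filter.mp hX).1 hB (mem_filter.mp hX).2 haB⟩
  rw [partBlock, this, sup_singleton, id]

theorem partBlock_mem (hσ : IsSetPartition σ Y) (ha : a ∈ Y) :
    partBlock σ a ∈ σ ∧ a ∈ partBlock σ a := by
  obtain ⟨B, hB, haB⟩ := hσ.exists_mem ha
  rw [hσ.partBlock_eq hB haB]
  exact ⟨hB, haB⟩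

theorem erase_partBlock (hσ : IsSetPartition σ (insert a S)) (ha : a ∉ S) :
    IsSetPartition (σ.erase (partBlock σ a)) (S \ (partBlock σ a).erase a) ∧
      (partBlock σ a).erase a ∉ σ.erase (partBlock σ a) := by
  obtain ⟨hB, haB⟩ := hσ.partBlock_mem (mem_insert_self a S)
  have hrest : IsSetPartition (σ.erase (partBlock σ a)) (S \ (partBlock σ a).erase a) := by
    convert hσ.erase hB using 1
    ext x
    by_cases hx : x = a <;> simp_all
  refine ⟨hrest, fun h ↦ ?_⟩
  obtain ⟨x, hx⟩ := hrest.1 _ h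
  exact (mem_sdiff.mp (hrest.subset h hx)).2 hx

theorem removePoint (hσ : IsSetPartition σ (insert a S)) (ha : a ∉ S) :
    IsSetPartition (removePoint a σ) S ∧ (partBlock σ a).erase a ∈ insert ∅ (removePoint a σ) := by
  obtain ⟨hB, haB⟩ := hσ.partBlock_mem (mem_insert_self a S)
  obtain ⟨hrest, hfresh⟩ := hσ.erase_partBlock ha
  rw [_root_.removePoint]
  rcases ((partBlock σ a).erase a).eq_empty_or_nonempty with hC | hC
  · rw [hC, erase_insert_eq_erase, erase_eq_of_notMem hrest.empty_notMem]
    rw [hC, sdiff_empty] at hrest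
    exact ⟨hrest, mem_insert_self _ _⟩
  · rw [erase_eq_of_notMem (mt mem_insert.mp (not_or.mpr ⟨hC.ne_empty.symm, hrest.empty_notMem⟩))]
    refine ⟨(isSetPartition_insert hfresh).mpr ⟨hC, fun x hx ↦ ?_, hrest⟩,
      mem_insert_of_mem (mem_insert_self _ _)⟩
    have := hσ.subset hB (mem_of_mem_erase hx)
    simp_all

end IsSetPartition

theorem removePoint_insertPoint (hσ : IsSetPartition σ S) (ha : a ∉ S) (hC : C ∈ insert ∅ σ) :
    removePoint a (insertPoint a σ C) = σ ∧ (partBlock (insertPoint a σ C) a).erase a = C := by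
  have hblock : partBlock (insertPoint a σ C) a = insert a C :=
    (hσ.insertPoint ha hC).partBlock_eq (mem_insert_self _ _) (mem_insert_self a C)
  have haC : a ∉ C := fun h ↦ ha (hσ.subset_of_mem_insert_empty hC h)
  rw [removePoint, hblock, erase_insert haC, insertPoint,
    erase_insert (mt mem_of_mem_erase (hσ.insert_notMem ha C))]
  refine ⟨?_, rfl⟩
  rcases mem_insert.mp hC with rfl | hC
  · rw [erase_insert_eq_erase, erase_eq_of_notMem hσ.empty_notMem,
      erase_eq_of_notMem hσ.empty_notMem]
  · rw [insert_erase hC, erase_eq_of_notMem hσ.empty_notMem]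

theorem insertPoint_removePoint (hσ : IsSetPartition σ (insert a S)) (ha : a ∉ S) :
    insertPoint a (removePoint a σ) ((partBlock σ a).erase a) = σ := by
  obtain ⟨hB, haB⟩ := hσ.partBlock_mem (mem_insert_self a S)
  have hfresh := (hσ.erase_partBlock ha).2
  set B := partBlock σ a
  have hempty : ∅ ∉ σ.erase B := fun h ↦ hσ.empty_notMem (mem_of_mem_erase h)
  have hrest : (removePoint a σ).erase (B.erase a) = σ.erase B := by
    rw [removePoint]
    rcases (B.erase a).eq_empty_or_nonempty with hC | hC
    · rw [hC, erase_insert_eq_erase, erase_eq_of_notMem hempty, erase_eq_of_notMem hempty]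
    · rw [erase_eq_of_notMem (s := insert _ _)
        (mt mem_insert.mp (not_or.mpr ⟨hC.ne_empty.symm, hempty⟩)), erase_insert hfresh]
  rw [insertPoint, insert_erase haB, hrest, insert_erase hB]

theorem sum_setPartitions_insert {M : Type*} [AddCommMonoid M] (ha : a ∉ S)
    (F : Finset (Finset α) → M) :
    ∑ σ ∈ setPartitions (insert a S), F σ =
      ∑ σ ∈ setPartitions S, ∑ C ∈ insert ∅ σ, F (insertPoint a σ C) := by
  rw [sum_sigma']
  symm
  refine sum_nbij' (fun p ↦ insertPoint a p.1 p.2)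
    (fun σ ↦ ⟨removePoint a σ, (partBlock σ a).erase a⟩) ?_ ?_ ?_ ?_ fun _ _ ↦ rfl
  · rintro ⟨σ, C⟩ hp
    simp only [mem_sigma, mem_setPartitions] at hp ⊢
    exact hp.1.insertPoint ha hp.2
  · intro σ hσ
    simpa only [mem_sigma, mem_setPartitions] using (mem_setPartitions.mp hσ).removePoint ha
  · rintro ⟨σ, C⟩ hp
    simp only [mem_sigma, mem_setPartitions] at hp
    obtain ⟨h₁, h₂⟩ := removePoint_insertPoint hp.1 ha hp.2
    rw [h₁, h₂]
  · exact fun σ hσ ↦ insertPoint_removePoint (mem_setPartitions.mp hσ) ha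

end InsertPoint

section MobiusIdentity

variable {α : Type*} [DecidableEq α] {S : Finset α}

theorem sum_setPartitions_neg_one_pow_mul_factorial {R : Type*} [CommRing R] (hS : S.Nonempty) :
    ∑ σ ∈ setPartitions S, (-1 : R) ^ (σ.card - 1) * (σ.card - 1).factorial =
      if S.card = 1 then 1 else 0 := by
  obtain ⟨a, ha⟩ := hS
  have haS : a ∉ S.erase a := notMem_erase a S
  have hinner : ∀ σ ∈ setPartitions (S.erase a),
      ∑ C ∈ insert ∅ σ, (-1 : R) ^ ((insertPoint a σ C).card - 1) *
        ((insertPoint a σ C).card - 1).factorial = if σ = ∅ then 1 else 0 := by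
    intro σ hσ
    rw [mem_setPartitions] at hσ
    have hfresh (C : Finset α) : insert a C ∉ σ.erase C :=
      mt mem_of_mem_erase (hσ.insert_notMem haS C)
    have hcard : ∀ C ∈ σ, (insertPoint a σ C).card = σ.card := fun C hC ↦ by
      rw [insertPoint, card_insert_of_notMem (hfresh C), card_erase_add_one hC]
    rw [sum_insert hσ.empty_notMem, sum_congr rfl fun C hC ↦ by rw [hcard C hC], sum_const,
      insertPoint, card_insert_of_notMem (hfresh ∅), erase_eq_of_notMem hσ.empty_notMem]
    rcases σ.eq_empty_or_nonempty with rfl | hne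
    · simp
    obtain ⟨k, hk⟩ := Nat.exists_eq_succ_of_ne_zero (card_ne_zero.mpr hne)
    rw [if_neg hne.ne_empty, hk]
    simp only [Nat.add_sub_cancel, Nat.factorial_succ, pow_succ, nsmul_eq_mul]
    push_cast
    ring
  rw [← insert_erase ha, sum_setPartitions_insert haS, insert_erase ha, sum_congr rfl hinner,
    sum_ite_eq']
  simp [mem_setPartitions, IsSetPartition, ← card_erase_add_one ha, eq_comm]

theorem sum_setPartitions_sum_neg_one_pow_mul_factorial_mul {R : Type*} [CommRing R]
    (f : Finset (Finset α) → R) (hS : S.Nonempty) :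
    ∑ Q ∈ setPartitions S, (∑ σ ∈ setPartitions Q,
      (-1 : R) ^ (σ.card - 1) * (σ.card - 1).factorial) * f Q = f {S} := by
  rw [sum_eq_single {S}]
  · rw [sum_setPartitions_neg_one_pow_mul_factorial (singleton_nonempty S), card_singleton,
      if_pos rfl, one_mul]
  · intro Q hQ hne
    rw [mem_setPartitions] at hQ
    rw [sum_setPartitions_neg_one_pow_mul_factorial (hQ.nonempty hS),
      if_neg (mt hQ.eq_singleton_of_card_eq_one hne), zero_mul]
  · exact fun h ↦ absurd (mem_setPartitions.mpr (isSetPartition_singleton hS)) h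

end MobiusIdentity

section BlockwisePartitions

variable {α : Type*} [DecidableEq α] {P Q : Finset (Finset α)} {X Y : Finset α}
  {σ : Finset (Finset (Finset α))}

theorem sup_id_image_sup_id (σ : Finset (Finset (Finset α))) :
    (σ.image (·.sup id)).sup id = (σ.sup id).sup id := by
  rw [sup_image, sup_eq_biUnion σ id, sup_biUnion]
  rfl

theorem IsSetPartition.disjoint_sup_of_disjoint (hQ : IsSetPartition Q Y)
    {b b' : Finset (Finset α)} (hb : b ⊆ Q) (hb' : b' ⊆ Q) (h : Disjoint b b') :
    Disjoint (b.sup id) (b'.sup id) :=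
  Finset.disjoint_sup_left.mpr fun B hB ↦ Finset.disjoint_sup_right.mpr fun B' hB' ↦
    hQ.2.1 B (hb hB) B' (hb' hB') fun hBB' ↦ disjoint_left.mp h hB (hBB' ▸ hB')

-- Records the partition `σ.sup id` refining `P` together with the grouping of its blocks by `P`.
def IsBlockwisePartition (σ : Finset (Finset (Finset α))) (P : Finset (Finset α)) : Prop :=
  σ.image (·.sup id) = P ∧ (∀ b ∈ σ, IsSetPartition b (b.sup id)) ∧
    ∀ b ∈ σ, ∀ b' ∈ σ, b ≠ b' → Disjoint (b.sup id) (b'.sup id)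

open scoped Classical in
noncomputable def blockwisePartitions (P : Finset (Finset α)) :
    Finset (Finset (Finset (Finset α))) :=
  (P.sup id).powerset.powerset.powerset.filter (IsBlockwisePartition · P)

theorem mem_blockwisePartitions : σ ∈ blockwisePartitions P ↔ IsBlockwisePartition σ P := by
  classical
  refine ⟨fun h ↦ (mem_filter.mp h).2, fun h ↦ mem_filter.mpr ⟨?_, h⟩⟩
  refine mem_powerset.mpr fun b hb ↦ mem_powerset.mpr fun B hB ↦ mem_powerset.mpr ?_
  rw [← h.1]
  exact (le_sup (f := id) hB).trans
    (le_sup (f := id) (mem_image_of_mem _ hb))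

theorem blockwisePartitions_empty : blockwisePartitions (∅ : Finset (Finset α)) = {∅} := by
  ext σ
  simp only [mem_blockwisePartitions, mem_singleton]
  refine ⟨fun h ↦ image_eq_empty.mp h.1, ?_⟩
  rintro rfl
  simp [IsBlockwisePartition]

namespace IsBlockwisePartition

theorem card_eq (hσ : IsBlockwisePartition σ P) (hP : ∀ X ∈ P, X.Nonempty) :
    σ.card = P.card := by
  rw [← hσ.1, card_image_of_injOn]
  intro b hb b' hb' hbb'
  by_contra hne
  have hdisj := hσ.2.2 b hb b' hb' hne
  rw [show b.sup id = b'.sup id from hbb', disjoint_self, bot_eq_empty] at hdisj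
  exact (hP _ (hσ.1 ▸ mem_image_of_mem _ hb')).ne_empty hdisj

theorem isSetPartition_sup (hσ : IsBlockwisePartition σ P) (hP : IsSetPartition P Y) :
    IsSetPartition (σ.sup id) Y := by
  refine ⟨fun B hB ↦ ?_, fun B hB B' hB' hne ↦ ?_, ?_⟩
  · obtain ⟨b, hb, hBb⟩ := mem_sup.mp hB
    exact (hσ.2.1 b hb).1 B hBb
  · obtain ⟨b, hb, hBb⟩ := mem_sup.mp hB
    obtain ⟨b', hb', hBb'⟩ := mem_sup.mp hB'
    by_cases hbb' : b = b'
    · exact (hσ.2.1 b hb).2.1 B hBb B' (hbb' ▸ hBb') hne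
    · exact disjoint_of_subset_left (le_sup (f := id) hBb)
        (disjoint_of_subset_right (le_sup (f := id) hBb') (hσ.2.2 b hb b' hb' hbb'))
  · rw [← sup_id_image_sup_id, hσ.1, hP.2.2]

theorem isSetPartition (hσ : IsBlockwisePartition σ P) (hP : IsSetPartition P Y) :
    IsSetPartition σ (σ.sup id) := by
  refine ⟨fun b hb ↦ ?_, fun b hb b' hb' hne ↦ disjoint_left.mpr fun B hBb hBb' ↦ ?_, rfl⟩
  · obtain ⟨x, hx⟩ := hP.1 _ (hσ.1 ▸ mem_image_of_mem _ hb)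
    obtain ⟨B, hB, -⟩ := mem_sup.mp hx
    exact ⟨B, hB⟩
  · obtain ⟨x, hx⟩ := (hσ.2.1 b hb).1 B hBb
    exact disjoint_left.mp (hσ.2.2 b hb b' hb' hne) (le_sup (f := id) hBb hx)
      (le_sup (f := id) hBb' hx)

end IsBlockwisePartition

namespace IsSetPartition

theorem isBlockwisePartition (hσ : IsSetPartition σ Q) (hQ : IsSetPartition Q Y) :
    IsBlockwisePartition σ (σ.image (·.sup id)) := by
  refine ⟨rfl, fun b hb ↦ ⟨fun B hB ↦ hQ.1 B (hσ.subset hb hB), fun B hB B' hB' ↦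
    hQ.2.1 B (hσ.subset hb hB) B' (hσ.subset hb hB'), rfl⟩, fun b hb b' hb' hne ↦ ?_⟩
  exact hQ.disjoint_sup_of_disjoint (hσ.subset hb) (hσ.subset hb') (hσ.2.1 b hb b' hb' hne)

theorem image_sup (hσ : IsSetPartition σ Q) (hQ : IsSetPartition Q Y) :
    IsSetPartition (σ.image (·.sup id)) Y := by
  refine ⟨?_, ?_, ?_⟩
  · simp only [mem_image, forall_exists_index, and_imp, forall_apply_eq_imp_iff₂]
    intro b hb
    obtain ⟨B, hB⟩ := hσ.1 b hb
    obtain ⟨x, hx⟩ := hQ.1 B (hσ.subset hb hB)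
    exact ⟨x, le_sup (f := id) hB hx⟩
  · simp only [mem_image, forall_exists_index, and_imp, forall_apply_eq_imp_iff₂]
    intro b hb b' hb' hne
    exact (hσ.isBlockwisePartition hQ).2.2 b hb b' hb' fun h ↦ hne (h ▸ rfl)
  · rw [sup_id_image_sup_id, hσ.2.2, hQ.2.2]

end IsSetPartition

theorem sum_setPartitions_sum_blockwisePartitions {M : Type*} [AddCommMonoid M]
    (F : Finset (Finset (Finset α)) → M) (Y : Finset α) :
    ∑ P ∈ setPartitions Y, ∑ σ ∈ blockwisePartitions P, F σ =
      ∑ Q ∈ setPartitions Y, ∑ σ ∈ setPartitions Q, F σ := by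
  rw [← sum_biUnion, ← sum_biUnion]
  · congr 1
    ext σ
    simp only [mem_biUnion, mem_blockwisePartitions, mem_setPartitions]
    constructor
    · rintro ⟨P, hP, hσ⟩
      exact ⟨_, hσ.isSetPartition_sup hP, hσ.isSetPartition hP⟩
    · rintro ⟨Q, hQ, hσ⟩
      exact ⟨_, hσ.image_sup hQ, hσ.isBlockwisePartition hQ⟩
  · intro Q _ Q' _ hne
    exact disjoint_left.mpr fun σ hσ hσ' ↦ hne <|
      (mem_setPartitions.mp hσ).2.2.symm.trans (mem_setPartitions.mp hσ').2.2
  · intro P _ P' _ hne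
    exact disjoint_left.mpr fun σ hσ hσ' ↦ hne <|
      (mem_blockwisePartitions.mp hσ).1.symm.trans (mem_blockwisePartitions.mp hσ').1

end BlockwisePartitions

section ProductExpansion

variable {α : Type*} [DecidableEq α] {P Q Q' : Finset (Finset α)} {X X' Y : Finset α}

theorem IsSetPartition.disjoint (hQ : IsSetPartition Q X) (hQ' : IsSetPartition Q' X')
    (h : Disjoint X X') : Disjoint Q Q' := disjoint_left.mpr fun B hB hB' ↦ by
  obtain ⟨x, hx⟩ := hQ.1 B hB
  exact disjoint_left.mp h (hQ.subset hB hx) (hQ'.subset hB' hx)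

theorem blockwisePartitions_insert (hP : IsSetPartition (insert X P) Y) (hX : X ∉ P) :
    blockwisePartitions (insert X P) =
      (setPartitions X ×ˢ blockwisePartitions P).image fun p ↦ insert p.1 p.2 := by
  obtain ⟨hXne, -, hP'⟩ := (isSetPartition_insert hX).mp hP
  ext σ
  simp only [mem_image, mem_product, mem_setPartitions, mem_blockwisePartitions, Prod.exists]
  constructor
  · intro hσ
    obtain ⟨b, hb, hbX⟩ := mem_image.mp (hσ.1 ▸ mem_insert_self X P)
    refine ⟨b, σ.erase b, ⟨hbX ▸ hσ.2.1 b hb, ?_, fun b' hb' ↦ hσ.2.1 b' (mem_of_mem_erase hb'),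
      fun b₁ h₁ b₂ h₂ ↦ hσ.2.2 b₁ (mem_of_mem_erase h₁) b₂ (mem_of_mem_erase h₂)⟩, insert_erase hb⟩
    ext X'
    simp only [mem_image, mem_erase]
    constructor
    · rintro ⟨b', ⟨hne, hb'⟩, rfl⟩
      refine (mem_insert.mp (hσ.1 ▸ mem_image_of_mem _ hb')).resolve_left fun hb'X ↦ ?_
      have hdisj := hσ.2.2 b' hb' b hb hne
      rw [hb'X, hbX, disjoint_self, bot_eq_empty] at hdisj
      exact hXne.ne_empty hdisj
    · intro hX'
      obtain ⟨b', hb', rfl⟩ := mem_image.mp (hσ.1 ▸ mem_insert_of_mem hX')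
      exact ⟨b', ⟨fun h ↦ hX (hbX ▸ h ▸ hX'), hb'⟩, rfl⟩
  · rintro ⟨Q, σ', ⟨hQ, hσ'⟩, rfl⟩
    refine ⟨by rw [image_insert, hQ.2.2, hσ'.1], (forall_mem_insert _ _ _).mpr
      ⟨hQ.2.2.symm ▸ hQ, hσ'.2.1⟩, fun b₁ h₁ b₂ h₂ hne ↦ ?_⟩
    have hdisj : ∀ b ∈ σ', Disjoint (Q.sup id) (b.sup id) := fun b hb ↦ hQ.2.2 ▸
      disjoint_of_subset_right (hP'.subset (hσ'.1 ▸ mem_image_of_mem _ hb)) disjoint_sdiff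
    rcases mem_insert.mp h₁ with rfl | h₁ <;> rcases mem_insert.mp h₂ with h₂ | h₂
    · exact absurd h₂.symm hne
    · exact hdisj b₂ h₂
    · exact h₂ ▸ (hdisj b₁ h₁).symm
    · exact hσ'.2.2 b₁ h₁ b₂ h₂ hne

theorem injOn_insert_setPartitions_blockwisePartitions (hX : X ∉ P) :
    Set.InjOn (fun p : Finset (Finset α) × Finset (Finset (Finset α)) ↦ insert p.1 p.2)
      ↑(setPartitions X ×ˢ blockwisePartitions P) := by
  have hfresh : ∀ Q ∈ setPartitions X, ∀ σ' ∈ blockwisePartitions P, Q ∉ σ' := fun Q hQ σ' hσ' h ↦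
    hX ((mem_setPartitions.mp hQ).2.2 ▸ (mem_blockwisePartitions.mp hσ').1 ▸ mem_image_of_mem _ h)
  rintro ⟨Q₁, σ₁⟩ hp₁ ⟨Q₂, σ₂⟩ hp₂ (heq : insert Q₁ σ₁ = insert Q₂ σ₂)
  simp only [coe_product, Set.mem_prod, mem_coe] at hp₁ hp₂
  obtain rfl : Q₁ = Q₂ := (mem_insert.mp (heq ▸ mem_insert_self Q₁ σ₁)).resolve_right
    (hfresh Q₁ hp₁.1 σ₂ hp₂.2)
  rw [← erase_insert (hfresh Q₁ hp₁.1 σ₁ hp₁.2), heq, erase_insert (hfresh Q₁ hp₂.1 σ₂ hp₂.2)]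

theorem prod_sum_setPartitions {R : Type*} [CommSemiring R] (h : Finset α → R)
    (hP : IsSetPartition P Y) :
    ∏ X ∈ P, ∑ Q ∈ setPartitions X, ∏ B ∈ Q, h B =
      ∑ σ ∈ blockwisePartitions P, ∏ B ∈ σ.sup id, h B := by
  induction P using Finset.induction_on generalizing Y with
  | empty => simp [blockwisePartitions_empty]
  | insert X P hX ih =>
    obtain ⟨-, -, hP'⟩ := (isSetPartition_insert hX).mp hP
    rw [prod_insert hX, ih hP', sum_mul_sum, ← sum_product', blockwisePartitions_insert hP hX,
      sum_image (injOn_insert_setPartitions_blockwisePartitions hX)]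
    refine sum_congr rfl fun ⟨Q, σ'⟩ hp ↦ ?_
    obtain ⟨hQ, hσ'⟩ := mem_product.mp hp
    rw [sup_insert, id, sup_eq_union, prod_union ((mem_setPartitions.mp hQ).disjoint
      ((mem_blockwisePartitions.mp hσ').isSetPartition_sup hP') disjoint_sdiff)]

end ProductExpansion

theorem lnStar_eq_sum_setPartitions {R : Type*} [CommRing R] (g : Finset ℕ → R) {Y : Finset ℕ}
    (hY : Y.Nonempty) :
    LnStar g Y = ∑ P ∈ setPartitions Y,
      (-1 : R) ^ (P.card - 1) * (P.card - 1).factorial * ∏ X ∈ P, g X := by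
  rw [LnStar, filter_true_of_mem fun P hP ↦ (mem_setPartitions.mp hP).nonempty hY]
  refine sum_congr rfl fun P hP ↦ ?_
  rw [prod_congr rfl fun X hX ↦ by
    rw [if_neg ((mem_setPartitions.mp hP).1 X hX).ne_empty, sub_zero]]

theorem lnStar_expStar_general {R : Type*} [CommRing R]
    (h : Finset ℕ → R) (h0 : h ∅ = 0) :
    ∀ Y : Finset ℕ, LnStar (ExpStar h) Y = h Y := by
  intro Y
  rcases Y.eq_empty_or_nonempty with rfl | hY
  · simp [LnStar, setPartitions_empty, filter_singleton, h0]
  calc LnStar (ExpStar h) Y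
      = ∑ P ∈ setPartitions Y, ∑ σ ∈ blockwisePartitions P,
          (-1 : R) ^ (σ.card - 1) * (σ.card - 1).factorial * ∏ B ∈ σ.sup id, h B := by
        rw [lnStar_eq_sum_setPartitions _ hY]
        refine sum_congr rfl fun P hP ↦ ?_
        rw [mem_setPartitions] at hP
        rw [show ∏ X ∈ P, ExpStar h X = _ from prod_sum_setPartitions h hP, mul_sum]
        exact sum_congr rfl fun σ hσ ↦ by rw [(mem_blockwisePartitions.mp hσ).card_eq hP.1]
    _ = ∑ Q ∈ setPartitions Y, (∑ σ ∈ setPartitions Q,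
          (-1 : R) ^ (σ.card - 1) * (σ.card - 1).factorial) * ∏ B ∈ Q, h B := by
        rw [sum_setPartitions_sum_blockwisePartitions]
        refine sum_congr rfl fun Q _ ↦ ?_
        rw [sum_mul]
        exact sum_congr rfl fun σ hσ ↦ by rw [(mem_setPartitions.mp hσ).2.2]
    _ = h Y := by
        rw [sum_setPartitions_sum_neg_one_pow_mul_factorial_mul _ hY, prod_singleton]

/-- The partition-sum exponential and the Möbius-type logarithm are mutually inverse:
`Ln_∗(Exp_∗(h)) = h` for every `h` with `h(∅) = 0`, for functions valued in a
commutative `ℚ`-algebra. -/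
theorem lnStar_expStar {R : Type*} [CommRing R] [Algebra ℚ R]
    (h : Finset ℕ → R) (h0 : h ∅ = 0) :
    ∀ Y : Finset ℕ, LnStar (ExpStar h) Y = h Y :=
  lnStar_expStar_general h h0
end

section
/- Suppose ‖𝔄_{1+n}(t) f‖ ≤ n! e^{n+2} ‖f‖ holds for the (1+n)-th order cumulant on each n. Then for a sequence B⁰ in the Banach space L_γ(F_H) with norm ‖g‖ = max_{n≥0} (γⁿ/n!)‖g_n‖ and 0 < γ < e^{-1}, the solution B_s(t,Y) = ∑_{n=0}^{s} (1/n!) ∑_{j₁≠...≠j_n} 𝔄_{1+n}(t) B⁰_{s-n} satisfies ‖B(t)‖_{L_γ} ≤ e²(1−γe)^{-1} ‖B(0)‖_{L_γ}. -/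
/-!
There are `s!/(s-n)!` injective labellings `j : Fin n → Fin s`, and each cumulant costs at most
`n! e^{n+2}`. The `n!` cancels the `1/n!` of the expansion, and `s!/(s-n)!` turns the weight
`γ^s/s!` into `γ^n · γ^{s-n}/(s-n)!`, so the `n`-th term of the weighted norm is at most
`e² (γe)ⁿ ‖B⁰‖`. Summing the geometric series of ratio `γe < 1` gives the bound.
-/

open Finset Nat

lemma card_filter_injective_eq_descFactorial (n s : ℕ) :
    #{j : Fin n → Fin s | Function.Injective j} = s.descFactorial n := by
  classical
  rw [← Fintype.card_subtype, Fintype.card_congr (Equiv.subtypeInjectiveEquivEmbedding _ _)]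
  simp [Fintype.card_embedding_eq]

lemma norm_sum_apply_le_card_mul {ι 𝕜 E F : Type*} [NontriviallyNormedField 𝕜]
    [SeminormedAddCommGroup E] [SeminormedAddCommGroup F] [NormedSpace 𝕜 E]
    [NormedSpace 𝕜 F] (S : Finset ι) (T : ι → E →L[𝕜] F) {C : ℝ} (hT : ∀ i ∈ S, ‖T i‖ ≤ C)
    (x : E) :
    ‖∑ i ∈ S, T i x‖ ≤ #S * (C * ‖x‖) :=
  calc ‖∑ i ∈ S, T i x‖ ≤ ∑ i ∈ S, ‖T i x‖ := norm_sum_le _ _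
    _ ≤ #S • (C * ‖x‖) :=
        sum_le_card_nsmul _ _ _ fun i hi => (T i).le_of_opNorm_le (hT i hi) x
    _ = #S * (C * ‖x‖) := nsmul_eq_mul _ _

lemma pow_div_factorial_mul_descFactorial {K : Type*} [Field K] [CharZero K] (γ : K) {n s : ℕ}
    (h : n ≤ s) : γ ^ s / s ! * s.descFactorial n = γ ^ n * (γ ^ (s - n) / (s - n)!) := by
  obtain ⟨k, rfl⟩ := Nat.exists_eq_add_of_le h
  rw [← Nat.factorial_mul_descFactorial h, Nat.add_sub_cancel_left, pow_add]
  push_cast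
  field_simp

lemma norm_smul_sum_injective_cumulant_le {E F : Type*} [SeminormedAddCommGroup E]
    [SeminormedAddCommGroup F] [NormedSpace ℝ E] [NormedSpace ℝ F] {γ : ℝ} (hγ : 0 ≤ γ)
    {n s : ℕ} (hns : n ≤ s) (A : (Fin n → Fin s) → E →L[ℝ] F)
    (hA : ∀ j, ‖A j‖ ≤ (n ! : ℝ) * Real.exp (n + 2)) (x : E) :
    γ ^ s / s ! * ‖(n ! : ℝ)⁻¹ • ∑ j with Function.Injective j, A j x‖
      ≤ Real.exp 2 * (γ * Real.exp 1) ^ n * (γ ^ (s - n) / (s - n)! * ‖x‖) := by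
  have hsum : ‖∑ j with Function.Injective j, A j x‖
      ≤ s.descFactorial n * (n ! * Real.exp (n + 2) * ‖x‖) := by
    rw [← card_filter_injective_eq_descFactorial]
    exact norm_sum_apply_le_card_mul _ A (fun j _ => hA j) x
  have hexp : Real.exp (n + 2) = Real.exp 1 ^ n * Real.exp 2 := by
    rw [← Real.exp_nat_mul, ← Real.exp_add, mul_one]
  rw [norm_smul, norm_inv, Real.norm_natCast]
  calc _ ≤ γ ^ s / s ! * ((n ! : ℝ)⁻¹ *
          (s.descFactorial n * (n ! * Real.exp (n + 2) * ‖x‖))) := by gcongr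
    _ = γ ^ s / s ! * s.descFactorial n * Real.exp (n + 2) * ‖x‖ := by field_simp
    _ = Real.exp 2 * (γ * Real.exp 1) ^ n * (γ ^ (s - n) / (s - n)! * ‖x‖) := by
        rw [pow_div_factorial_mul_descFactorial γ hns, hexp]; ring

/-- A priori estimate for the nonperturbative solution of the dual quantum BBGKY hierarchy:
if the `(1+n)`-th order cumulants satisfy `‖𝔄_{1+n}(t) f‖ ≤ n! e^{n+2} ‖f‖`, then for initial
data `B⁰` in the space `𝔏_γ` with norm `max_n (γⁿ/n!) ‖g_n‖` and `0 < γ < e⁻¹`, the solution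
`B_s(t) = ∑_{n=0}^{s} (1/n!) ∑_{j₁≠⋯≠j_n} 𝔄_{1+n}(t) B⁰_{s-n}` satisfies
`‖B(t)‖_{𝔏_γ} ≤ e² (1 - γe)⁻¹ ‖B(0)‖_{𝔏_γ}`. -/
theorem dual_BBGKY_solution_estimate
    (X : ℕ → Type*) [∀ n, NormedAddCommGroup (X n)] [∀ n, NormedSpace ℝ (X n)]
    (γ : ℝ) (hγ0 : 0 < γ) (hγ : γ < (Real.exp 1)⁻¹)
    -- the cumulant operator `𝔄_{1+n}(t)` acting on the variables `Y \ (j₁,…,j_n)`,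
    -- indexed by the choice of the (distinct) particle labels `j₁ ≠ … ≠ j_n`
    (A : ∀ s n : ℕ, (Fin n → Fin s) → (X (s - n) →L[ℝ] X s))
    (hA : ∀ s n (j : Fin n → Fin s), ‖A s n j‖ ≤ (n.factorial : ℝ) * Real.exp (n + 2))
    (B0 : ∀ n, X n) (M : ℝ)
    (hB0 : ∀ n : ℕ, γ ^ n / (n.factorial : ℝ) * ‖B0 n‖ ≤ M) :
    ∀ s : ℕ,
      γ ^ s / (s.factorial : ℝ) *
        ‖∑ n ∈ Finset.range (s + 1), ((n.factorial : ℝ))⁻¹ •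
            ∑ j ∈ Finset.univ.filter (fun j : Fin n → Fin s => Function.Injective j),
              A s n j (B0 (s - n))‖
        ≤ Real.exp 2 * (1 - γ * Real.exp 1)⁻¹ * M := by
  intro s
  set r := γ * Real.exp 1
  have hr0 : 0 ≤ r := by positivity
  have hr1 : r < 1 := by rwa [← lt_inv_mul_iff₀' (Real.exp_pos 1), mul_one]
  have hM0 : 0 ≤ M := (norm_nonneg (B0 0)).trans (by simpa using hB0 0)
  refine (mul_le_mul_of_nonneg_left (norm_sum_le _ _) (by positivity)).trans ?_
  rw [mul_sum]
  calc _ ≤ ∑ n ∈ range (s + 1), Real.exp 2 * r ^ n * M := by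
        refine sum_le_sum fun n hn => (norm_smul_sum_injective_cumulant_le hγ0.le
          (Nat.lt_succ_iff.mp (mem_range.mp hn)) _ (hA s n) _).trans ?_
        gcongr
        exact hB0 _
    _ = Real.exp 2 * (∑ n ∈ range (s + 1), r ^ n) * M := by rw [mul_sum, sum_mul]
    _ ≤ Real.exp 2 * (1 - r)⁻¹ * M := by
        gcongr
        have := geom_sum_Ico_le_of_lt_one (m := 0) (n := s + 1) hr0 hr1
        rwa [pow_zero, one_div, ← range_eq_Ico] at this
end

section
/- Suppose ‖𝔄_{1+n}(−t) f‖₁ ≤ n! e^{n+2} ‖f‖₁ holds for each n ≥ 0. Then for F⁰ in the Banach space L¹_α(F_H) with norm ‖f‖ = ∑_n αⁿ ‖f_n‖₁ and α > e, the series F_s(t) = ∑_{n=0}^{∞} (1/n!) Tr_{s+1,...,s+n} 𝔄_{1+n}(−t) F⁰_{s+n} converges absolutely and ‖F(t)‖_{L¹_α} ≤ e²(1 − e/α)^{-1} ‖F(0)‖_{L¹_α}. -/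
/-!
Put `c k = αᵏ ‖F⁰ₖ‖` and `r = e / α < 1`. The bound on `T s n` turns the weighted `(s, n)` term
`αˢ (n!)⁻¹ ‖T s n F⁰_{s+n}‖` into at most `e² rⁿ c_{s+n}`. Summing first over `s` (a tail of `∑ c`)
and then over `n` (a geometric series) bounds the whole double series by `e² (1 - r)⁻¹ ∑ c`;
since the terms are nonnegative, the order of summation may be exchanged.
-/

open Real Nat

theorem tsum_le_tsum_of_nonneg_of_le {ι : Type*} {f g : ι → ℝ} (hf : ∀ i, 0 ≤ f i)
    (hfg : ∀ i, f i ≤ g i) (hg : Summable g) : ∑' i, f i ≤ ∑' i, g i :=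
  (hg.of_nonneg_of_le hf hfg).tsum_le_tsum hfg hg

section ShiftedGeometricSeries

variable {c : ℕ → ℝ} {r : ℝ}

theorem tsum_nat_add_le_tsum (hc0 : ∀ k, 0 ≤ c k) (hc : Summable c) (n : ℕ) :
    ∑' s, c (s + n) ≤ ∑' k, c k := by
  rw [← hc.sum_add_tsum_nat_add n]
  exact le_add_of_nonneg_left (Finset.sum_nonneg fun k _ => hc0 k)

theorem tsum_pow_mul_nat_add_le (hc0 : ∀ k, 0 ≤ c k) (hc : Summable c) (hr0 : 0 ≤ r) (n : ℕ) :
    ∑' s, r ^ n * c (s + n) ≤ r ^ n * ∑' k, c k := by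
  rw [tsum_mul_left]
  exact mul_le_mul_of_nonneg_left (tsum_nat_add_le_tsum hc0 hc n) (pow_nonneg hr0 _)

theorem summable_uncurry_pow_mul_nat_add (hc0 : ∀ k, 0 ≤ c k) (hc : Summable c)
    (hr0 : 0 ≤ r) (hr1 : r < 1) :
    Summable (Function.uncurry fun s n => r ^ n * c (s + n)) := by
  have hswap : Summable fun p : ℕ × ℕ => r ^ p.1 * c (p.2 + p.1) := by
    refine (summable_prod_of_nonneg fun p => mul_nonneg (pow_nonneg hr0 _) (hc0 _)).2 ⟨?_, ?_⟩
    · exact fun n => ((summable_nat_add_iff n).2 hc).mul_left (r ^ n)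
    · exact ((summable_geometric_of_lt_one hr0 hr1).mul_right _).of_nonneg_of_le
        (fun n => tsum_nonneg fun s => mul_nonneg (pow_nonneg hr0 _) (hc0 _))
        (tsum_pow_mul_nat_add_le hc0 hc hr0)
  exact hswap.prod_symm

theorem summable_pow_mul_nat_add (hc0 : ∀ k, 0 ≤ c k) (hc : Summable c)
    (hr0 : 0 ≤ r) (hr1 : r < 1) (s : ℕ) :
    Summable fun n => r ^ n * c (s + n) :=
  (summable_uncurry_pow_mul_nat_add hc0 hc hr0 hr1).prod_factor s

theorem summable_tsum_pow_mul_nat_add (hc0 : ∀ k, 0 ≤ c k) (hc : Summable c)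
    (hr0 : 0 ≤ r) (hr1 : r < 1) :
    Summable fun s => ∑' n, r ^ n * c (s + n) :=
  ((summable_prod_of_nonneg fun _ => mul_nonneg (pow_nonneg hr0 _) (hc0 _)).1
    (summable_uncurry_pow_mul_nat_add hc0 hc hr0 hr1)).2

theorem tsum_tsum_pow_mul_nat_add_le (hc0 : ∀ k, 0 ≤ c k) (hc : Summable c)
    (hr0 : 0 ≤ r) (hr1 : r < 1) :
    ∑' s, ∑' n, r ^ n * c (s + n) ≤ (1 - r)⁻¹ * ∑' k, c k := by
  rw [← (summable_uncurry_pow_mul_nat_add hc0 hc hr0 hr1).tsum_comm,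
    ← tsum_geometric_of_lt_one hr0 hr1, ← tsum_mul_right]
  exact tsum_le_tsum_of_nonneg_of_le
    (fun n => tsum_nonneg fun s => mul_nonneg (pow_nonneg hr0 _) (hc0 _))
    (tsum_pow_mul_nat_add_le hc0 hc hr0) ((summable_geometric_of_lt_one hr0 hr1).mul_right _)

end ShiftedGeometricSeries

theorem factorial_inv_mul_norm_apply_le {E F : Type*} [SeminormedAddCommGroup E]
    [SeminormedAddCommGroup F] [NormedSpace ℝ E] [NormedSpace ℝ F] {n : ℕ} {L : E →L[ℝ] F}
    (hL : ‖L‖ ≤ (n ! : ℝ) * exp (n + 2)) (x : E) :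
    (n ! : ℝ)⁻¹ * ‖L x‖ ≤ exp 2 * exp 1 ^ n * ‖x‖ := by
  have hfac : (0 : ℝ) < n ! := mod_cast n.factorial_pos
  rw [inv_mul_le_iff₀ hfac]
  calc ‖L x‖ ≤ n ! * exp (n + 2) * ‖x‖ := L.le_of_opNorm_le hL x
    _ = n ! * (exp 2 * exp 1 ^ n * ‖x‖) := by rw [exp_add, exp_one_pow]; ring

theorem pow_mul_factorial_inv_mul_norm_apply_le {E F : Type*} [SeminormedAddCommGroup E]
    [SeminormedAddCommGroup F] [NormedSpace ℝ E] [NormedSpace ℝ F] {α : ℝ} (hα : 0 < α) (s : ℕ)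
    {n : ℕ} {L : E →L[ℝ] F} (hL : ‖L‖ ≤ (n ! : ℝ) * exp (n + 2)) (x : E) :
    α ^ s * ((n ! : ℝ)⁻¹ * ‖L x‖) ≤ exp 2 * ((exp 1 / α) ^ n * (α ^ (s + n) * ‖x‖)) :=
  calc α ^ s * ((n ! : ℝ)⁻¹ * ‖L x‖) ≤ α ^ s * (exp 2 * exp 1 ^ n * ‖x‖) :=
        mul_le_mul_of_nonneg_left (factorial_inv_mul_norm_apply_le hL x) (by positivity)
    _ = exp 2 * ((exp 1 / α) ^ n * (α ^ (s + n) * ‖x‖)) := by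
        rw [div_pow, pow_add]; field_simp

theorem mul_norm_tsum_le_tsum {E : Type*} [SeminormedAddCommGroup E] {f : ℕ → E} {g : ℕ → ℝ}
    {a : ℝ} (ha : 0 < a) (hg : Summable g) (hfg : ∀ n, a * ‖f n‖ ≤ g n) :
    a * ‖∑' n, f n‖ ≤ ∑' n, g n := by
  rw [← le_div_iff₀' ha]
  exact tsum_of_norm_bounded (hg.hasSum.div_const a) fun n => (le_div_iff₀' ha).2 (hfg n)

theorem BBGKY_solution_series_estimate_general
    (X : ℕ → Type*) [∀ n, NormedAddCommGroup (X n)] [∀ n, NormedSpace ℝ (X n)]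
    (α : ℝ) (hα : Real.exp 1 < α)
    (T : ∀ s n : ℕ, X (s + n) →L[ℝ] X s)
    (hT : ∀ s n : ℕ, ‖T s n‖ ≤ (n.factorial : ℝ) * Real.exp (n + 2))
    (F0 : ∀ n, X n)
    (hF0 : Summable fun n : ℕ => α ^ n * ‖F0 n‖) :
    (∀ s : ℕ, Summable fun n : ℕ => ((n.factorial : ℝ))⁻¹ * ‖T s n (F0 (s + n))‖) ∧
    ∑' s : ℕ, α ^ s * ‖∑' n : ℕ, ((n.factorial : ℝ))⁻¹ • T s n (F0 (s + n))‖
      ≤ Real.exp 2 * (1 - Real.exp 1 / α)⁻¹ * ∑' n : ℕ, α ^ n * ‖F0 n‖ := by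
  set r := exp 1 / α
  set c : ℕ → ℝ := fun k => α ^ k * ‖F0 k‖
  have hα0 : 0 < α := (exp_pos 1).trans hα
  have hr0 : 0 ≤ r := by positivity
  have hr1 : r < 1 := (div_lt_one hα0).2 hα
  have hc0 : ∀ k, 0 ≤ c k := fun k => by positivity
  have hterm : ∀ s n, α ^ s * ((n ! : ℝ)⁻¹ * ‖T s n (F0 (s + n))‖) ≤ exp 2 * (r ^ n * c (s + n)) :=
    fun s n => pow_mul_factorial_inv_mul_norm_apply_le hα0 s (hT s n) _
  have hsum : ∀ s, Summable fun n => (n ! : ℝ)⁻¹ * ‖T s n (F0 (s + n))‖ := fun s =>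
    ((summable_pow_mul_nat_add hc0 hF0 hr0 hr1 s).mul_left ((α ^ s)⁻¹ * exp 2)).of_nonneg_of_le
      (fun n => by positivity) fun n => by
        rw [mul_assoc, le_inv_mul_iff₀ (by positivity)]; exact hterm s n
  have hrow : ∀ s, α ^ s * ‖∑' n, (n ! : ℝ)⁻¹ • T s n (F0 (s + n))‖
      ≤ exp 2 * ∑' n, r ^ n * c (s + n) := fun s => by
    rw [← tsum_mul_left]
    refine mul_norm_tsum_le_tsum (by positivity)
      ((summable_pow_mul_nat_add hc0 hF0 hr0 hr1 s).mul_left _) fun n => ?_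
    rw [norm_smul, norm_inv, _root_.norm_natCast]
    exact hterm s n
  refine ⟨hsum, ?_⟩
  calc _ ≤ ∑' s, exp 2 * ∑' n, r ^ n * c (s + n) :=
        tsum_le_tsum_of_nonneg_of_le (fun s => by positivity) hrow
          ((summable_tsum_pow_mul_nat_add hc0 hF0 hr0 hr1).mul_left _)
    _ ≤ exp 2 * ((1 - r)⁻¹ * ∑' k, c k) := by
        rw [tsum_mul_left]
        gcongr
        exact tsum_tsum_pow_mul_nat_add_le hc0 hF0 hr0 hr1
    _ = _ := by ring

/-- Convergence estimate for the nonperturbative solution of the quantum BBGKY hierarchy: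
if the composed maps `T s n = Tr_{s+1,…,s+n} ∘ 𝔄_{1+n}(−t)` satisfy
`‖T s n‖ ≤ n! e^{n+2}`, then for `F⁰` in the space `𝔏¹_α` with norm `∑_n αⁿ ‖f_n‖₁` and
`α > e`, the series `F_s(t) = ∑_{n} (1/n!) T s n F⁰_{s+n}` converges absolutely and
`‖F(t)‖_{𝔏¹_α} ≤ e² (1 - e/α)⁻¹ ‖F(0)‖_{𝔏¹_α}`. -/
theorem BBGKY_solution_series_estimate
    (X : ℕ → Type*) [∀ n, NormedAddCommGroup (X n)] [∀ n, NormedSpace ℝ (X n)]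
    [∀ n, CompleteSpace (X n)]
    (α : ℝ) (hα : Real.exp 1 < α)
    (T : ∀ s n : ℕ, X (s + n) →L[ℝ] X s)
    (hT : ∀ s n : ℕ, ‖T s n‖ ≤ (n.factorial : ℝ) * Real.exp (n + 2))
    (F0 : ∀ n, X n)
    (hF0 : Summable fun n : ℕ => α ^ n * ‖F0 n‖) :
    (∀ s : ℕ, Summable fun n : ℕ => ((n.factorial : ℝ))⁻¹ * ‖T s n (F0 (s + n))‖) ∧
    ∑' s : ℕ, α ^ s * ‖∑' n : ℕ, ((n.factorial : ℝ))⁻¹ • T s n (F0 (s + n))‖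
      ≤ Real.exp 2 * (1 - Real.exp 1 / α)⁻¹ * ∑' n : ℕ, α ^ n * ‖F0 n‖ :=
  BBGKY_solution_series_estimate_general X α hα T hT F0 hF0
end
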